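/- arXiv:2212.05739 — 2 statements merged into one kernel-verified Lean document; each statement's English description precedes it below -/
import Mathlib

section
/- Let a ≥ 2 and b ≥ 1 be integers. Then λ(K⁺_{a,b}) is the largest real root of the polynomial f_{a,b}(x) = x³ − x² − abx + ab − 2b; that is, f_{a,b}(λ(K⁺_{a,b})) = 0 and every real root x of f_{a,b} satisfies x ≤ λ(K⁺_{a,b}). -/
open SimpleGraph

/-- The spectral radius (largest adjacency eigenvalue) of a finite simple graph. -/
noncomputable def specRad {V : Type*} [Fintype V] (G : SimpleGraph V) : ℝ :=
  letI : DecidableEq V := Classical.decEq V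
  letI : DecidableRel G.Adj := Classical.decRel _
  sSup (spectrum ℝ (G.adjMatrix ℝ))

/-- `KplusAB a b` : the complete bipartite graph `K_{a,b}` with one extra edge
(between vertices `0` and `1`) inside the part of size `a`. -/
def KplusAB (a b : ℕ) : SimpleGraph (Fin a ⊕ Fin b) where
  Adj x y :=
    match x, y with
    | .inl i, .inl j => (i.val = 0 ∧ j.val = 1) ∨ (i.val = 1 ∧ j.val = 0)
    | .inl _, .inr _ => True
    | .inr _, .inl _ => True
    | .inr _, .inr _ => False
  symm := by constructor; rintro (i | i) (j | j) h <;> simp_all <;> tauto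
  loopless := by constructor; rintro (i | i) h <;> simp_all <;> omega

/-!
Write `f(x) = (x - 1)(x² - ab) - 2b`. Since `f(1) = -2b < 0`, the largest real root `r` of `f`
exceeds `1`. The vector equal to `b / (r - 1)` on the two ends of the extra edge, `b / r` on the
rest of the `a`-part and `1` on the `b`-part is positive, and it is an eigenvector of the adjacency
matrix for `r` precisely because `f(r) = 0` (the three sets form an equitable partition). For a
symmetric nonnegative matrix `M` with a positive eigenvector `v` for `r`, every eigenvector `w` for
`μ` satisfies `|μ| (v ⬝ |w|) ≤ v ⬝ (M |w|) = r (v ⬝ |w|)`, so `r` is the spectral radius.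
-/

open Matrix

namespace Matrix

variable {n : Type*} [Fintype n]

theorem mem_spectrum_iff_exists_mulVec_eq_smul {K : Type*} [Field K] [DecidableEq n]
    (A : Matrix n n K) (μ : K) : μ ∈ spectrum K A ↔ ∃ v ≠ 0, A *ᵥ v = μ • v := by
  rw [← spectrum_toLin', ← Module.End.hasEigenvalue_iff_mem_spectrum]
  constructor
  · intro h
    obtain ⟨v, hv⟩ := h.exists_hasEigenvector
    exact ⟨v, hv.2, by simpa using Module.End.mem_eigenspace_iff.1 hv.1⟩
  · rintro ⟨v, hv0, hv⟩
    exact Module.End.hasEigenvalue_of_hasEigenvector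
      ⟨Module.End.mem_eigenspace_iff.2 (by simpa using hv), hv0⟩

theorem abs_mul_abs_le_mulVec_abs {M : Matrix n n ℝ} (hM : ∀ i j, 0 ≤ M i j) {μ : ℝ}
    {w : n → ℝ} (hμ : M *ᵥ w = μ • w) : |μ| • |w| ≤ M *ᵥ |w| := fun i =>
  calc |μ| * |w i| = |(M *ᵥ w) i| := by rw [hμ, Pi.smul_apply, smul_eq_mul, abs_mul]
    _ ≤ ∑ j, |M i j * w j| := Finset.abs_sum_le_sum_abs _ _
    _ = (M *ᵥ |w|) i := by simp only [abs_mul, abs_of_nonneg (hM i _)]; rfl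

theorem abs_le_of_pos_left_eigenvector {M : Matrix n n ℝ} (hM : ∀ i j, 0 ≤ M i j)
    {v : n → ℝ} (hv : ∀ i, 0 < v i) {r : ℝ} (hr : v ᵥ* M = r • v)
    {μ : ℝ} {w : n → ℝ} (hw : w ≠ 0) (hμ : M *ᵥ w = μ • w) : |μ| ≤ r := by
  have hpos : 0 < v ⬝ᵥ |w| := by
    obtain ⟨i, hi⟩ := Function.ne_iff.1 hw
    exact Finset.sum_pos' (fun j _ => mul_nonneg (hv j).le (abs_nonneg _))
      ⟨i, Finset.mem_univ _, mul_pos (hv i) (abs_pos.2 hi)⟩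
  refine le_of_mul_le_mul_right ?_ hpos
  calc |μ| * (v ⬝ᵥ |w|) = v ⬝ᵥ (|μ| • |w|) := by rw [dotProduct_smul, smul_eq_mul]
    _ ≤ v ⬝ᵥ (M *ᵥ |w|) :=
        dotProduct_le_dotProduct_of_nonneg_left (abs_mul_abs_le_mulVec_abs hM hμ)
          fun i => (hv i).le
    _ = r * (v ⬝ᵥ |w|) := by rw [dotProduct_mulVec, hr, smul_dotProduct, smul_eq_mul]

theorem sSup_spectrum_eq_of_pos_eigenvector [Nonempty n] [DecidableEq n] {M : Matrix n n ℝ}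
    (hsymm : M.IsSymm) (hM : ∀ i j, 0 ≤ M i j) {v : n → ℝ} (hv : ∀ i, 0 < v i) {r : ℝ}
    (hr : M *ᵥ v = r • v) : sSup (spectrum ℝ M) = r := by
  have hr_mem : r ∈ spectrum ℝ M :=
    (mem_spectrum_iff_exists_mulVec_eq_smul M r).2
      ⟨v, fun h => (hv (Classical.arbitrary n)).ne' (congrFun h _), hr⟩
  have hr_left : v ᵥ* M = r • v := by rw [← mulVec_transpose, hsymm.eq, hr]
  have hle : ∀ μ ∈ spectrum ℝ M, μ ≤ r := fun μ hμ => by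
    obtain ⟨w, hw, hμ⟩ := (mem_spectrum_iff_exists_mulVec_eq_smul M μ).1 hμ
    exact (le_abs_self μ).trans (abs_le_of_pos_left_eigenvector hM hv hr_left hw hμ)
  exact IsGreatest.csSup_eq ⟨hr_mem, hle⟩

end Matrix

theorem specRad_eq_of_pos_eigenvector {V : Type*} [Fintype V] [Nonempty V]
    (G : SimpleGraph V) [DecidableRel G.Adj] {v : V → ℝ} (hv : ∀ i, 0 < v i) {r : ℝ}
    (hr : G.adjMatrix ℝ *ᵥ v = r • v) : specRad G = r := by
  classical
  unfold specRad
  convert Matrix.sSup_spectrum_eq_of_pos_eigenvector G.isSymm_adjMatrix (fun i j => ?_) hv hr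
  rw [adjMatrix_apply]
  split_ifs <;> norm_num

theorem exists_isGreatest_root_sub_one_mul_sq_sub {p q : ℝ} (hp : 0 ≤ p) (hq : 0 < q) :
    ∃ r, IsGreatest {x : ℝ | (x - 1) * (x ^ 2 - p) - q = 0} r ∧ 1 < r := by
  set g : ℝ → ℝ := fun x => (x - 1) * (x ^ 2 - p) - q
  have hg : Continuous g := by fun_prop
  have hbdd : BddAbove {x | g x = 0} := by
    refine ⟨1 + p + q, fun x (hx : g x = 0) => not_lt.1 fun hlt => ?_⟩
    have : 1 < x ^ 2 - p := by nlinarith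
    have : 0 < g x := by simp only [g]; nlinarith
    exact this.ne' hx
  obtain ⟨x₀, hx₀_mem, hx₀⟩ : ∃ x ∈ Set.Icc 1 (2 + p + q), g x = 0 := by
    refine intermediate_value_Icc (by linarith) hg.continuousOn ⟨by simp [g, hq.le], ?_⟩
    simp only [g]
    nlinarith
  have hx₀_gt : 1 < x₀ := hx₀_mem.1.lt_of_ne fun h => by simp [g, ← h, hq.ne'] at hx₀
  have hr := (isClosed_eq hg continuous_const).isGreatest_csSup ⟨x₀, hx₀⟩ hbdd
  exact ⟨_, hr, hx₀_gt.trans_le (hr.2 hx₀)⟩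

theorem Fin.sum_univ_ite_val_lt {M : Type*} [AddCommMonoid M] {a m : ℕ} (hm : m ≤ a) (x y : M) :
    ∑ i : Fin a, (if (i : ℕ) < m then x else y) = m • x + (a - m) • y := by
  have hcard :=
    Finset.card_filter_add_card_filter_not (s := Finset.univ) fun i : Fin a => (i : ℕ) < m
  rw [Fin.card_filter_val_lt, Finset.card_univ, Fintype.card_fin, min_eq_right hm] at hcard
  rw [Finset.sum_ite, Finset.sum_const, Finset.sum_const, Fin.card_filter_val_lt, min_eq_right hm]
  congr 2
  omega

namespace KplusAB

variable {a b : ℕ}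

@[simp]
theorem adj_inl_inl {i j : Fin a} : (KplusAB a b).Adj (.inl i) (.inl j) ↔ (i : ℕ) + j = 1 := by
  simp only [KplusAB]
  omega

@[simp]
theorem adj_inl_inr {i : Fin a} {k : Fin b} : (KplusAB a b).Adj (.inl i) (.inr k) := trivial

@[simp]
theorem adj_inr_inl {i : Fin a} {k : Fin b} : (KplusAB a b).Adj (.inr k) (.inl i) := trivial

@[simp]
theorem not_adj_inr_inr {k l : Fin b} : ¬(KplusAB a b).Adj (.inr k) (.inr l) := id

theorem sum_ite_val_add_eq_one (ha : 2 ≤ a) (i : Fin a) (p q : ℝ) :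
    ∑ j : Fin a, (if (i : ℕ) + j = 1 then (if (j : ℕ) < 2 then p else q) else 0) =
      if (i : ℕ) < 2 then p else 0 := by
  have hsummand : ∀ j : Fin a, (if (i : ℕ) + j = 1 then (if (j : ℕ) < 2 then p else q) else 0) =
      if (i : ℕ) < 2 then (if (j : ℕ) = 1 - i then p else 0) else 0 := fun j => by
    split_ifs <;> first | rfl | omega
  rw [Finset.sum_congr rfl fun j _ => hsummand j]
  split_ifs with hi
  · rw [Fin.sum_univ_eq_sum_range (fun j => if j = 1 - (i : ℕ) then p else 0), Finset.sum_ite_eq',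
      if_pos (Finset.mem_range.2 (by omega))]
  · exact Finset.sum_const_zero

noncomputable def perronVec (a b : ℕ) (r : ℝ) : Fin a ⊕ Fin b → ℝ :=
  Sum.elim (fun i => if (i : ℕ) < 2 then b / (r - 1) else b / r) 1

theorem perronVec_pos (hb : 1 ≤ b) {r : ℝ} (hr : 1 < r) (x : Fin a ⊕ Fin b) :
    0 < perronVec a b r x := by
  have hb' : (0 : ℝ) < b := by exact_mod_cast hb
  rcases x with i | k
  · simp only [perronVec, Sum.elim_inl]
    split_ifs
    · exact div_pos hb' (sub_pos.2 hr)
    · exact div_pos hb' (by linarith)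
  · exact one_pos

variable [DecidableRel (KplusAB a b).Adj]

theorem adjMatrix_mulVec_perronVec (ha : 2 ≤ a) {r : ℝ} (hr : 1 < r)
    (hroot : (r - 1) * (r ^ 2 - a * b) - 2 * b = 0) :
    (KplusAB a b).adjMatrix ℝ *ᵥ perronVec a b r = r • perronVec a b r := by
  have hr0 : r ≠ 0 := by positivity
  have hr1 : r - 1 ≠ 0 := (sub_pos.2 hr).ne'
  ext (i | k)
  · simp only [mulVec, dotProduct, Fintype.sum_sum_type, adjMatrix_apply, perronVec,
      Sum.elim_inl, Sum.elim_inr, adj_inl_inl, adj_inl_inr, ite_mul, one_mul, zero_mul,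
      if_true, Pi.one_apply, Pi.smul_apply, smul_eq_mul, sum_ite_val_add_eq_one ha,
      Finset.sum_const, Finset.card_univ, Fintype.card_fin, nsmul_eq_mul, mul_one]
    split_ifs
    · field_simp
      ring
    · field_simp
      ring
  · simp only [mulVec, dotProduct, Fintype.sum_sum_type, adjMatrix_apply, perronVec,
      Sum.elim_inl, Sum.elim_inr, adj_inr_inl, not_adj_inr_inr, ite_mul, one_mul, zero_mul,
      if_true, if_false, Pi.one_apply, Pi.smul_apply, smul_eq_mul, Fin.sum_univ_ite_val_lt ha,
      Finset.sum_const_zero, add_zero, nsmul_eq_mul, Nat.cast_sub ha]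
    field_simp
    linear_combination -hroot

end KplusAB

theorem Kplus_char_poly (a b : ℕ) (ha : 2 ≤ a) (hb : 1 ≤ b) :
    (specRad (KplusAB a b)) ^ 3 - (specRad (KplusAB a b)) ^ 2
        - ((a : ℝ) * b) * specRad (KplusAB a b) + (a : ℝ) * b - 2 * b = 0 ∧
      ∀ x : ℝ, x ^ 3 - x ^ 2 - ((a : ℝ) * b) * x + (a : ℝ) * b - 2 * b = 0 →
        x ≤ specRad (KplusAB a b) := by
  classical
  have hf : ∀ x : ℝ, x ^ 3 - x ^ 2 - ((a : ℝ) * b) * x + (a : ℝ) * b - 2 * b =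
      (x - 1) * (x ^ 2 - a * b) - 2 * b := fun x => by ring
  obtain ⟨r, ⟨hroot, hmax⟩, hr⟩ :=
    exists_isGreatest_root_sub_one_mul_sq_sub (p := a * b) (q := 2 * b) (by positivity)
      (by positivity)
  have : Nonempty (Fin a ⊕ Fin b) := ⟨.inr ⟨0, hb⟩⟩
  have hspec : specRad (KplusAB a b) = r :=
    specRad_eq_of_pos_eigenvector _ (KplusAB.perronVec_pos hb hr)
      (KplusAB.adjMatrix_mulVec_perronVec ha hr hroot)
  simp only [hspec, hf]
  exact ⟨hroot, fun x hx => hmax hx⟩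
end

section
/- Let m ≥ 8 be an integer. Then λ(K₁ ∨ (K₃ ∪ I_{m−6})) is the largest real root of the polynomial h(x) = x³ − 2x² + (3 − m)x + 2m − 12, and λ(K₁ ∨ (K₃ ∪ I_{m−6})) < (1 + √(4m − 3))/2. -/
/-! The vertices `0, 1, 2, 3` span a `K₄` and the other `s = m - 6` vertices are pendant at the
apex `0`. For an eigenvector `v` with eigenvalue `μ`, write `a = v 0` and `c`, `p` for the sums of
`v` over the `K₄` and over the pendant vertices. The eigenvalue equations at the pendant vertices,
the triangle and the apex give `μ p = s a`, `(μ + 1) (c - a) = 3 c` and `μ a = c + p - a`, and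
eliminating `c` and `p` leaves `a h(μ) = 0`. If `a = 0` these equations force `v = 0` unless
`μ ∈ {0, -1}`; conversely every nonzero root of `h` has an explicit eigenvector. So the spectral
radius is the largest root of `h`, which exceeds `2` because `h(2) = -6`. Finally
`β = (1 + √(4m - 3)) / 2` satisfies `β² = β + m - 1`, and in terms of it the Taylor expansion
of `h` at `β` has positive coefficients, so `h > 0` on `[β, ∞)`. -/

open SimpleGraph

/-- `K₁ ∨ (K₃ ∪ I_s)` : apex vertex `0` joined to all others, vertices `1,2,3`
forming a triangle, and `s` further vertices with no other edges. -/
def coneTriangle (s : ℕ) : SimpleGraph (Fin (s + 4)) where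
  Adj x y := x ≠ y ∧ (x.val = 0 ∨ y.val = 0 ∨ (x.val ≤ 3 ∧ y.val ≤ 3))
  symm := ⟨by rintro x y ⟨h1, h2⟩; exact ⟨h1.symm, by tauto⟩⟩
  loopless := ⟨by rintro x ⟨h1, _⟩; exact h1 rfl⟩

open Finset Matrix

theorem Matrix.mem_spectrum_iff_exists_mulVec_eq_smul_s17 {n K : Type*} [Fintype n] [DecidableEq n]
    [Field K] (A : Matrix n n K) (μ : K) :
    μ ∈ spectrum K A ↔ ∃ v ≠ 0, A *ᵥ v = μ • v := by
  rw [← Matrix.spectrum_toLin', ← Module.End.hasEigenvalue_iff_mem_spectrum,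
    Module.End.hasEigenvalue_iff, Submodule.ne_bot_iff]
  simp [and_comm]

def coneTriangleCore (s : ℕ) : Finset (Fin (s + 4)) := {j | (j : ℕ) ≤ 3}

section
variable {s : ℕ}

theorem mem_coneTriangleCore {j : Fin (s + 4)} : j ∈ coneTriangleCore s ↔ (j : ℕ) ≤ 3 := by
  simp [coneTriangleCore]

theorem zero_mem_coneTriangleCore : (0 : Fin (s + 4)) ∈ coneTriangleCore s := by
  simp [coneTriangleCore]

theorem card_coneTriangleCore : #(coneTriangleCore s) = 4 := by
  simpa [coneTriangleCore, Nat.lt_succ_iff] using Fin.card_filter_val_lt (n := s + 4) (m := 4)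

theorem card_coneTriangleCore_erase_zero : #((coneTriangleCore s).erase 0) = 3 := by
  rw [card_erase_of_mem zero_mem_coneTriangleCore, card_coneTriangleCore]

theorem card_coneTriangleCore_compl : #(coneTriangleCore s)ᶜ = s := by
  rw [card_compl, Fintype.card_fin, card_coneTriangleCore, Nat.add_sub_cancel]

variable {K : Type*} [Field K]

theorem coneTriangle_mulVec_apply [DecidableRel (coneTriangle s).Adj] (v : Fin (s + 4) → K)
    (i : Fin (s + 4)) :
    ((coneTriangle s).adjMatrix K *ᵥ v) i =
      if i = 0 then ∑ j, v j - v 0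
      else if i ∈ coneTriangleCore s then ∑ j ∈ coneTriangleCore s, v j - v i
      else v 0 := by
  have mem_nbr (j : Fin (s + 4)) : j ∈ (coneTriangle s).neighborFinset i ↔
      i ≠ j ∧ ((i : ℕ) = 0 ∨ (j : ℕ) = 0 ∨ ((i : ℕ) ≤ 3 ∧ (j : ℕ) ≤ 3)) :=
    mem_neighborFinset _ _ _
  rw [adjMatrix_mulVec_apply]
  split_ifs with h0 hcore
  · subst h0
    rw [← sum_erase_eq_sub (mem_univ 0)]
    congr 1; ext j
    simp only [mem_nbr, mem_erase, mem_univ, true_or, and_true, ne_eq, Fin.ext_iff, Fin.val_zero]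
    omega
  · rw [← sum_erase_eq_sub hcore]
    congr 1; ext j
    simp only [mem_coneTriangleCore, Fin.ext_iff, Fin.val_zero] at h0 hcore
    simp only [mem_nbr, mem_coneTriangleCore, mem_erase, ne_eq, Fin.ext_iff]
    omega
  · rw [← sum_singleton v 0]
    congr 1; ext j
    simp only [mem_coneTriangleCore, Fin.ext_iff, Fin.val_zero] at h0 hcore
    simp only [mem_nbr, mem_singleton, ne_eq, Fin.ext_iff, Fin.val_zero]
    omega

theorem coneTriangle_exists_mulVec_eq_smul_of_root [DecidableRel (coneTriangle s).Adj] {x : K}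
    (hx0 : x ≠ 0) (hx : x ^ 3 - 2 * x ^ 2 - (3 + s) * x + 2 * s = 0) :
    ∃ v ≠ 0, (coneTriangle s).adjMatrix K *ᵥ v = x • v := by
  obtain ⟨v, hv⟩ : ∃ v : Fin (s + 4) → K, ∀ j, v j =
      if j = 0 then x * (x - 2) else if j ∈ coneTriangleCore s then x else x - 2 := ⟨_, fun _ ↦ rfl⟩
  have sum_core : ∑ j ∈ coneTriangleCore s, v j = x * (x - 2) + 3 * x := by
    rw [← add_sum_erase _ _ zero_mem_coneTriangleCore, sum_congr rfl (g := fun _ ↦ x),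
      sum_const, card_coneTriangleCore_erase_zero]
    · simp [hv]
    · intro j hj
      simp only [hv, if_neg (ne_of_mem_erase hj), if_pos (mem_of_mem_erase hj)]
  have sum_compl : ∑ j ∈ (coneTriangleCore s)ᶜ, v j = s * (x - 2) := by
    rw [sum_congr rfl (g := fun _ ↦ x - 2), sum_const, card_coneTriangleCore_compl, nsmul_eq_mul]
    intro j hj
    rw [mem_compl] at hj
    simp only [hv, if_neg hj, if_neg (show j ≠ 0 from fun h ↦ hj (h ▸ zero_mem_coneTriangleCore))]
  refine ⟨v, fun h ↦ hx0 ?_, funext fun i ↦ ?_⟩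
  · simpa [hv, coneTriangleCore, Fin.ext_iff] using congrFun h ⟨1, by omega⟩
  · rw [coneTriangle_mulVec_apply, Pi.smul_apply, smul_eq_mul,
      ← sum_add_sum_compl (coneTriangleCore s), sum_core, sum_compl]
    by_cases h0 : i = 0
    · simp only [hv, h0, if_true]
      linear_combination -hx
    by_cases hcore : i ∈ coneTriangleCore s
    · simp only [hv, h0, hcore, if_true, if_false]
      ring
    · simp only [hv, h0, hcore, if_true, if_false]

theorem coneTriangle_eigenvalue_cases [DecidableRel (coneTriangle s).Adj] {μ : K}
    {v : Fin (s + 4) → K} (hv : v ≠ 0) (hev : (coneTriangle s).adjMatrix K *ᵥ v = μ • v) :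
    μ ^ 3 - 2 * μ ^ 2 - (3 + s) * μ + 2 * s = 0 ∨ μ = 0 ∨ μ = -1 := by
  have eq_at (i : Fin (s + 4)) := congrFun hev i
  simp only [coneTriangle_mulVec_apply, Pi.smul_apply, smul_eq_mul] at eq_at
  set a := v 0
  set c := ∑ j ∈ coneTriangleCore s, v j
  set p := ∑ j ∈ (coneTriangleCore s)ᶜ, v j
  have apex : μ * a = c + p - a := by
    simpa [← sum_add_sum_compl (coneTriangleCore s) v] using (eq_at 0).symm
  have core_eq : ∀ i ∈ (coneTriangleCore s).erase 0, (μ + 1) * v i = c := by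
    intro i hi
    have := eq_at i
    rw [if_neg (ne_of_mem_erase hi), if_pos (mem_of_mem_erase hi)] at this
    linear_combination -this
  have compl_eq : ∀ i ∈ (coneTriangleCore s)ᶜ, μ * v i = a := by
    intro i hi
    have hi0 : i ≠ 0 := fun h ↦ mem_compl.mp hi (h ▸ zero_mem_coneTriangleCore)
    simpa [hi0, mem_compl.mp hi] using (eq_at i).symm
  have core_sum : (μ + 1) * (c - a) = 3 * c := by
    rw [← sum_erase_eq_sub zero_mem_coneTriangleCore, mul_sum, sum_congr rfl core_eq, sum_const,
      card_coneTriangleCore_erase_zero, nsmul_eq_mul, Nat.cast_ofNat]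
  have compl_sum : μ * p = s * a := by
    rw [mul_sum, sum_congr rfl compl_eq, sum_const, card_coneTriangleCore_compl, nsmul_eq_mul]
  by_cases ha : a = 0
  · right
    by_contra! hμ
    have compl_zero : ∀ i ∈ (coneTriangleCore s)ᶜ, v i = 0 := fun i hi ↦
      (mul_eq_zero.mp ((compl_eq i hi).trans ha)).resolve_left hμ.1
    have hc : c = 0 := by
      linear_combination (μ + 1) * ha - apex - sum_eq_zero compl_zero
    have core_zero : ∀ i ∈ (coneTriangleCore s).erase 0, v i = 0 := fun i hi ↦
      (mul_eq_zero.mp ((core_eq i hi).trans hc)).resolve_left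
        (fun h ↦ hμ.2 (eq_neg_of_add_eq_zero_left h))
    refine hv (funext fun i ↦ ?_)
    by_cases h0 : i = 0
    · exact h0 ▸ ha
    by_cases hcore : i ∈ coneTriangleCore s
    · exact core_zero i (mem_erase.mpr ⟨h0, hcore⟩)
    · exact compl_zero i (mem_compl.mpr hcore)
  · left
    refine (mul_eq_zero.mp ?_).resolve_right ha
    linear_combination (μ * (μ - 2)) * apex + μ * core_sum + (μ - 2) * compl_sum
end

theorem specRad_coneTriangle_eq {s : ℕ} {r : ℝ}
    (hr : IsGreatest {x : ℝ | x ^ 3 - 2 * x ^ 2 - (3 + s) * x + 2 * s = 0} r) (hr0 : 0 < r) :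
    specRad (coneTriangle s) = r := by
  -- `specRad` is stated with classical decidability instances; make them the local ones
  let : DecidableEq (Fin (s + 4)) := Classical.decEq _
  let : DecidableRel (coneTriangle s).Adj := Classical.decRel _
  show sSup (spectrum ℝ ((coneTriangle s).adjMatrix ℝ)) = r
  refine IsGreatest.csSup_eq ⟨?_, fun μ hμ ↦ ?_⟩
  · rw [mem_spectrum_iff_exists_mulVec_eq_smul_s17]
    exact coneTriangle_exists_mulVec_eq_smul_of_root hr0.ne' hr.1
  · rw [mem_spectrum_iff_exists_mulVec_eq_smul_s17] at hμ
    obtain ⟨v, hv, hev⟩ := hμ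
    rcases coneTriangle_eigenvalue_cases hv hev with hroot | rfl | rfl
    · exact hr.2 hroot
    · exact hr0.le
    · linarith

theorem Continuous.exists_isGreatest_zero {f : ℝ → ℝ} (hf : Continuous f) {a b : ℝ}
    (hab : a ≤ b) (ha : f a < 0) (hb : ∀ x, b ≤ x → 0 < f x) :
    ∃ r, IsGreatest {x | f x = 0} r ∧ a < r ∧ r < b := by
  obtain ⟨x₀, hx₀, hfx₀⟩ := intermediate_value_Ioo hab hf.continuousOn ⟨ha, hb b le_rfl⟩
  have lt_b : ∀ x ∈ {x | f x = 0}, x < b := fun x hx ↦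
    not_le.mp fun hbx ↦ (hb x hbx).ne' hx
  have bdd : BddAbove {x | f x = 0} := ⟨b, fun x hx ↦ (lt_b x hx).le⟩
  have mem : sSup {x | f x = 0} ∈ {x | f x = 0} :=
    (isClosed_eq hf continuous_const).csSup_mem ⟨x₀, hfx₀⟩ bdd
  exact ⟨_, ⟨mem, fun x hx ↦ le_csSup bdd hx⟩, hx₀.1.trans_le (le_csSup bdd hfx₀), lt_b _ mem⟩

theorem one_add_sqrt_div_two_sq {m : ℝ} (hm : 3 / 4 ≤ m) :
    ((1 + √(4 * m - 3)) / 2) ^ 2 = (1 + √(4 * m - 3)) / 2 + m - 1 := by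
  linear_combination Real.sq_sqrt (by linarith : 0 ≤ 4 * m - 3) / 4

theorem three_lt_one_add_sqrt_div_two {m : ℝ} (hm : 7 < m) : 3 < (1 + √(4 * m - 3)) / 2 := by
  have : 5 < √(4 * m - 3) := Real.lt_sqrt_of_sq_lt (by linarith)
  linarith

theorem cubic_pos_of_le {m β x : ℝ} (hm : 8 ≤ m) (hβ : β ^ 2 = β + m - 1) (hβ3 : 3 < β)
    (hx : β ≤ x) : 0 < x ^ 3 - 2 * x ^ 2 + (3 - m) * x + 2 * m - 12 := by
  have taylor : x ^ 3 - 2 * x ^ 2 + (3 - m) * x + 2 * m - 12 =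
      (β + m - 11) + (2 * m - β) * (x - β) + (3 * β - 2) * (x - β) ^ 2 + (x - β) ^ 3 := by
    linear_combination (3 * x - 2 * β - 1) * hβ
  have hy : 0 ≤ x - β := sub_nonneg.mpr hx
  have hβm : β < 2 * m := by nlinarith
  rw [taylor]
  have := mul_nonneg (by linarith : (0 : ℝ) ≤ 2 * m - β) hy
  have := mul_nonneg (by linarith : (0 : ℝ) ≤ 3 * β - 2) (sq_nonneg (x - β))
  have := pow_nonneg hy 3
  linarith

theorem coneTriangle_size_char_poly (m : ℕ) (hm : 8 ≤ m) :
    ((specRad (coneTriangle (m - 6))) ^ 3 - 2 * (specRad (coneTriangle (m - 6))) ^ 2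
          + (3 - (m : ℝ)) * specRad (coneTriangle (m - 6)) + 2 * m - 12 = 0 ∧
        ∀ x : ℝ, x ^ 3 - 2 * x ^ 2 + (3 - (m : ℝ)) * x + 2 * m - 12 = 0 →
          x ≤ specRad (coneTriangle (m - 6))) ∧
      specRad (coneTriangle (m - 6)) < (1 + Real.sqrt (4 * m - 3)) / 2 := by
  have hm_real : (8 : ℝ) ≤ m := by exact_mod_cast hm
  set β := (1 + √(4 * (m : ℝ) - 3)) / 2
  have hβ3 : 3 < β := three_lt_one_add_sqrt_div_two (by linarith)
  obtain ⟨r, hr, hr2, hrβ⟩ := Continuous.exists_isGreatest_zero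
      (f := fun x : ℝ ↦ x ^ 3 - 2 * x ^ 2 + (3 - m) * x + 2 * m - 12)
      (by fun_prop) (a := 2) (b := β) (by linarith) (by ring_nf; norm_num)
      (fun x hx ↦ cubic_pos_of_le hm_real (one_add_sqrt_div_two_sq (by linarith)) hβ3 hx)
  have cubic_eq (x : ℝ) : x ^ 3 - 2 * x ^ 2 + (3 - m) * x + 2 * m - 12 =
      x ^ 3 - 2 * x ^ 2 - (3 + ((m - 6 : ℕ) : ℝ)) * x + 2 * ((m - 6 : ℕ) : ℝ) := by
    rw [Nat.cast_sub (by omega)]; ring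
  have hspec : specRad (coneTriangle (m - 6)) = r :=
    specRad_coneTriangle_eq (by simpa only [cubic_eq] using hr) (by linarith)
  rw [hspec]
  exact ⟨⟨hr.1, fun x hx ↦ hr.2 hx⟩, hrβ⟩
end
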